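/- For every integer N (positive or negative) there is a constant C_N, independent of μ ≥ 1, such that ‖⟨μ^{1/2} x₂⟩^N (T_μ f)(x',ξ')‖_{L²(ℝ⁴_{x',ξ'})} ≤ C_N ‖⟨μ^{1/2} y₂⟩^N f(y')‖_{L²(ℝ²_{y'})} for all f for which the right-hand side is finite. Here x' = (x₂,x₃) and y' = (y₂,y₃). -/

import Mathlib

/-!
For fixed `x`, the map `ξ ↦ T_μ f(x, ξ)` is `√μ` times a unimodular factor times the Fourier
transform of `y ↦ g(√μ(y - x)) f(y)`, so Plancherel's inequality `‖ĥ‖₂² ≤ (2π)² ‖h‖₂²` bounds the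
`ξ`-integral by `(2π)² μ ∫ |g(√μ(y - x))|² |f(y)|² dy`. For integrable `h` that inequality is
proved by damping with a Gaussian `e^{-ε|ξ|²}`: Fubini turns the damped integral into
`∫∫ h(y) conj h(y') K_ε(y - y')`, where the heat kernel `K_ε` has total mass `(2π)²`, Schur's test
bounds this, and Fatou's lemma lets `ε → 0`.

Peetre's inequality `⟨a⟩^{2N} ≤ 2^{|N|} ⟨b - a⟩^{2|N|} ⟨b⟩^{2N}` moves the weight from `x₂` to `y₂`
at the price of a factor `⟨√μ(y₂ - x₂)⟩^{2|N|}`, and the substitution `z = √μ(y - x)` gives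
`μ ∫ ⟨√μ(y₂ - x₂)⟩^{2|N|} |g(√μ(y - x))|² dx = ∫ ⟨z₂⟩^{2|N|} |g(z)|² dz`, a constant independent
of `μ` that is finite because `g` decays rapidly.
-/

open MeasureTheory

/-- The Fourier transform on `ℝ²`: `f̂(ζ) = ∫ e^{−i⟨x,ζ⟩} f(x) dx`. -/
noncomputable def fourierTransform2 (f : ℝ × ℝ → ℂ) (ζ : ℝ × ℝ) : ℂ :=
  ∫ x : ℝ × ℝ, Complex.exp (-Complex.I * ((x.1 * ζ.1 + x.2 * ζ.2 : ℝ) : ℂ)) * f x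

/-- The euclidean length of a vector in `ℝ²`. -/
noncomputable def euclNorm2 (ξ : ℝ × ℝ) : ℝ := Real.sqrt (ξ.1 ^ 2 + ξ.2 ^ 2)

/-- Japanese bracket `⟨s⟩ = (1+s²)^{1/2}`. -/
noncomputable def jBracket (s : ℝ) : ℝ := Real.sqrt (1 + s ^ 2)

/-- The wave packet transform at frequency scale `μ` with fundamental wave packet `g`. -/
noncomputable def wavePacket (μ : ℝ) (g : SchwartzMap (ℝ × ℝ) ℝ) (f : ℝ × ℝ → ℂ)
    (x ξ : ℝ × ℝ) : ℂ :=
  (Real.sqrt μ : ℂ) *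
    ∫ y : ℝ × ℝ, Complex.exp (-Complex.I * ((ξ.1 * (y.1 - x.1) + ξ.2 * (y.2 - x.2) : ℝ) : ℂ)) *
      ((g (Real.sqrt μ • (y - x)) : ℝ) : ℂ) * f y

open Complex Real ComplexConjugate
open scoped ENNReal

lemma ENNReal.two_mul_le_add_sq (u v : ℝ≥0∞) : 2 * u * v ≤ u ^ 2 + v ^ 2 := by
  induction u using ENNReal.recTopCoe with
  | top => simp [top_pow]
  | coe u =>
    induction v using ENNReal.recTopCoe with
    | top => simp [top_pow]
    | coe v => exact_mod_cast _root_.two_mul_le_add_sq u v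

lemma Complex.enorm_ofReal_of_nonneg {r : ℝ} (hr : 0 ≤ r) : ‖(r : ℂ)‖ₑ = ENNReal.ofReal r := by
  rw [← ofReal_norm, norm_real, Real.norm_of_nonneg hr]

lemma zpow_le_pow_natAbs_mul_zpow {K : Type*} [Field K] [LinearOrder K] [IsStrictOrderedRing K]
    {A B D : K} (hA : 0 < A) (hB : 0 < B) (hAB : A ≤ D * B) (hBA : B ≤ D * A) (N : ℤ) :
    A ^ N ≤ D ^ N.natAbs * B ^ N := by
  obtain ⟨n, rfl | rfl⟩ := N.eq_nat_or_neg
  · simpa [mul_pow] using pow_le_pow_left₀ hA.le hAB n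
  · rw [Int.natAbs_neg, Int.natAbs_natCast, zpow_neg, zpow_neg, zpow_natCast, zpow_natCast,
      ← div_eq_mul_inv, le_div_iff₀ (pow_pos hB n), inv_mul_le_iff₀ (pow_pos hA n), ← mul_pow,
      mul_comm A]
    exact pow_le_pow_left₀ hB.le hBA n

theorem lintegral_mul_lintegral_mul_sub_le {G : Type*} [MeasurableSpace G] [AddCommGroup G]
    [MeasurableAdd₂ G] [MeasurableNeg G] {μ : Measure G} [SFinite μ] [μ.IsAddLeftInvariant]
    [μ.IsNegInvariant] {a K : G → ℝ≥0∞} (ha : AEMeasurable a μ) (hK : Measurable K) :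
    ∫⁻ y, a y * ∫⁻ y', a y' * K (y - y') ∂μ ∂μ ≤ (∫⁻ z, K z ∂μ) * ∫⁻ y, a y ^ 2 ∂μ := by
  set c := ∫⁻ z, K z ∂μ
  have hKl : ∀ y, Measurable fun y' => K (y - y') := fun y =>
    hK.comp (measurable_const.sub measurable_id)
  have hKr : ∀ y', Measurable fun y => K (y - y') := fun y' => hK.comp (measurable_id.sub_const y')
  have ha2 : AEMeasurable (fun y => a y ^ 2) μ := ha.pow_const 2
  have hdiag : ∀ y, ∫⁻ y', a y ^ 2 * K (y - y') ∂μ = a y ^ 2 * c := fun y => by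
    rw [lintegral_const_mul _ (hKl y), lintegral_sub_left_eq_self]
  have hoff : ∫⁻ y, ∫⁻ y', a y' ^ 2 * K (y - y') ∂μ ∂μ = c * ∫⁻ y, a y ^ 2 ∂μ := by
    rw [lintegral_lintegral_swap (ha2.comp_snd.mul (hK.comp measurable_sub).aemeasurable),
      ← lintegral_const_mul'' c ha2]
    refine lintegral_congr fun y' => ?_
    rw [lintegral_const_mul _ (hKr y'), lintegral_sub_right_eq_self, mul_comm]
  have hsum : ∫⁻ y, ∫⁻ y', (a y ^ 2 + a y' ^ 2) * K (y - y') ∂μ ∂μ =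
      2 * (c * ∫⁻ y, a y ^ 2 ∂μ) := by
    simp_rw [add_mul]
    rw [lintegral_congr fun y => lintegral_add_left ((hKl y).const_mul _) _]
    simp_rw [hdiag]
    rw [lintegral_add_left' (ha2.mul_const c), lintegral_mul_const'' c ha2, hoff, two_mul, mul_comm]
  refine (ENNReal.mul_le_mul_iff_right two_ne_zero ENNReal.ofNat_ne_top).1 ?_
  rw [← hsum, ← lintegral_const_mul' _ _ ENNReal.ofNat_ne_top]
  refine lintegral_mono fun y => ?_
  rw [← mul_assoc, ← lintegral_const_mul'' (f := fun y' => a y' * K (y - y')) _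
    (ha.mul (hKl y).aemeasurable)]
  refine lintegral_mono fun y' => ?_
  calc 2 * a y * (a y' * K (y - y')) = 2 * a y * a y' * K (y - y') := by ring
    _ ≤ _ := mul_le_mul_left (ENNReal.two_mul_le_add_sq _ _) _

lemma lintegral_comp_smul {E : Type*} [NormedAddCommGroup E] [NormedSpace ℝ E]
    [FiniteDimensional ℝ E] [MeasurableSpace E] [BorelSpace E] (μ : Measure E)
    [μ.IsAddHaarMeasure] {f : E → ℝ≥0∞} (hf : Measurable f) {r : ℝ} (hr : r ≠ 0) :
    ∫⁻ x, f (r • x) ∂μ = ENNReal.ofReal |(r ^ Module.finrank ℝ E)⁻¹| * ∫⁻ x, f x ∂μ := by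
  rw [← lintegral_map hf (measurable_const_smul r), Measure.map_addHaar_smul μ hr,
    lintegral_smul_measure, smul_eq_mul]

lemma eLpNorm_two_sq {α E : Type*} [MeasurableSpace α] {ν : Measure α} [NormedAddCommGroup E]
    (u : α → E) : eLpNorm u 2 ν ^ 2 = ∫⁻ a, ‖u a‖ₑ ^ 2 ∂ν := by
  simpa using eLpNorm_nnreal_pow_eq_lintegral (f := u) (μ := ν) (p := 2) two_ne_zero

lemma eLpNorm_two_le_mul_of_lintegral_sq_le {α β E F : Type*} [MeasurableSpace α]
    [MeasurableSpace β] {ν : Measure α} {ν' : Measure β} [NormedAddCommGroup E]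
    [NormedAddCommGroup F] {u : α → E} {v : β → F} {c : ℝ≥0∞}
    (h : ∫⁻ a, ‖u a‖ₑ ^ 2 ∂ν ≤ c ^ 2 * ∫⁻ b, ‖v b‖ₑ ^ 2 ∂ν') :
    eLpNorm u 2 ν ≤ c * eLpNorm v 2 ν' := by
  rwa [← ENNReal.pow_le_pow_left_iff two_ne_zero, mul_pow, eLpNorm_two_sq, eLpNorm_two_sq]

lemma lintegral_mul_lintegral_comm {α β : Type*} [MeasurableSpace α] [MeasurableSpace β]
    {μ : Measure α} {ν : Measure β} [SFinite μ] [SFinite ν] {W : α → ℝ≥0∞} {G : α → β → ℝ≥0∞}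
    {F : β → ℝ≥0∞} (hW : ∀ x, W x ≠ ∞) (hF : ∀ y, F y ≠ ∞)
    (hm : AEMeasurable (fun p : α × β => W p.1 * G p.1 p.2 * F p.2) (μ.prod ν)) :
    ∫⁻ x, W x * ∫⁻ y, G x y * F y ∂ν ∂μ = ∫⁻ y, F y * ∫⁻ x, W x * G x y ∂μ ∂ν := by
  calc ∫⁻ x, W x * ∫⁻ y, G x y * F y ∂ν ∂μ = ∫⁻ x, ∫⁻ y, W x * G x y * F y ∂ν ∂μ := by
        refine lintegral_congr fun x => ?_
        rw [← lintegral_const_mul' _ _ (hW x)]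
        simp_rw [mul_assoc]
    _ = ∫⁻ y, ∫⁻ x, W x * G x y * F y ∂μ ∂ν := lintegral_lintegral_swap hm
    _ = ∫⁻ y, F y * ∫⁻ x, W x * G x y ∂μ ∂ν := by
        refine lintegral_congr fun y => ?_
        rw [← lintegral_const_mul' _ _ (hF y)]
        simp_rw [mul_comm (F y)]

noncomputable def dotPhase (y ξ : ℝ × ℝ) : ℂ := cexp (-I * ((y.1 * ξ.1 + y.2 * ξ.2 : ℝ) : ℂ))

lemma norm_dotPhase (y ξ : ℝ × ℝ) : ‖dotPhase y ξ‖ = 1 := by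
  simp [dotPhase, Complex.norm_exp]

lemma enorm_dotPhase (y ξ : ℝ × ℝ) : ‖dotPhase y ξ‖ₑ = 1 := by
  rw [← ofReal_norm, norm_dotPhase, ENNReal.ofReal_one]

@[fun_prop]
lemma Continuous.dotPhase {α : Type*} [TopologicalSpace α] {f g : α → ℝ × ℝ} (hf : Continuous f)
    (hg : Continuous g) : Continuous fun a => _root_.dotPhase (f a) (g a) := by
  unfold _root_.dotPhase; fun_prop

lemma dotPhase_mul_conj (y y' ξ : ℝ × ℝ) :
    dotPhase y ξ * conj (dotPhase y' ξ) = dotPhase (y - y') ξ := by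
  simp only [dotPhase, ← Complex.exp_conj, ← Complex.exp_add, map_mul, map_neg, conj_I,
    conj_ofReal, Prod.fst_sub, Prod.snd_sub]
  push_cast
  ring_nf

noncomputable def gaussian2 (ε : ℝ) (ξ : ℝ × ℝ) : ℝ := Real.exp (-(ε * (ξ.1 ^ 2 + ξ.2 ^ 2)))

lemma gaussian2_nonneg (ε : ℝ) (ξ : ℝ × ℝ) : 0 ≤ gaussian2 ε ξ := Real.exp_nonneg _

@[fun_prop]
lemma continuous_gaussian2 (ε : ℝ) : Continuous (gaussian2 ε) := by
  unfold gaussian2; fun_prop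

lemma gaussian2_eq_mul (ε : ℝ) (ξ : ℝ × ℝ) :
    gaussian2 ε ξ = Real.exp (-ε * ξ.1 ^ 2) * Real.exp (-ε * ξ.2 ^ 2) := by
  rw [gaussian2, ← Real.exp_add]; ring_nf

lemma integrable_gaussian2 {ε : ℝ} (hε : 0 < ε) : Integrable (gaussian2 ε) := by
  simp_rw [funext (gaussian2_eq_mul ε), Measure.volume_eq_prod]
  exact (integrable_exp_neg_mul_sq hε).mul_prod (integrable_exp_neg_mul_sq hε)

noncomputable def heatKernel2 (ε : ℝ) (z : ℝ × ℝ) : ℝ :=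
  π / ε * Real.exp (-(z.1 ^ 2 + z.2 ^ 2) / (4 * ε))

lemma heatKernel2_nonneg {ε : ℝ} (hε : 0 < ε) (z : ℝ × ℝ) : 0 ≤ heatKernel2 ε z := by
  unfold heatKernel2; positivity

lemma continuous_heatKernel2 (ε : ℝ) : Continuous (heatKernel2 ε) := by
  unfold heatKernel2; fun_prop

lemma integral_gaussian2_mul_dotPhase {ε : ℝ} (hε : 0 < ε) (z : ℝ × ℝ) :
    ∫ ξ, (gaussian2 ε ξ : ℂ) * dotPhase z ξ = heatKernel2 ε z := by
  have hsplit : ∀ ξ : ℝ × ℝ, (gaussian2 ε ξ : ℂ) * dotPhase z ξ =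
      (cexp (I * (-z.1 : ℂ) * ξ.1) * cexp (-(ε : ℂ) * ξ.1 ^ 2)) *
      (cexp (I * (-z.2 : ℂ) * ξ.2) * cexp (-(ε : ℂ) * ξ.2 ^ 2)) := fun ξ => by
    simp only [gaussian2, dotPhase, ofReal_exp, ← Complex.exp_add]
    push_cast
    ring_nf
  have hε' : 0 < (ε : ℂ).re := by simpa using hε
  simp_rw [hsplit, Measure.volume_eq_prod]
  rw [integral_prod_mul (fun t : ℝ => cexp (I * (-z.1 : ℂ) * t) * cexp (-(ε : ℂ) * t ^ 2))
      (fun t : ℝ => cexp (I * (-z.2 : ℂ) * t) * cexp (-(ε : ℂ) * t ^ 2)),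
    fourierIntegral_gaussian hε', fourierIntegral_gaussian hε']
  have hπε : (π : ℂ) / ε ≠ 0 := div_ne_zero (ofReal_ne_zero.2 pi_ne_zero) (ofReal_ne_zero.2 hε.ne')
  calc (π / ε : ℂ) ^ (1 / 2 : ℂ) * cexp (-(-(z.1 : ℂ)) ^ 2 / (4 * ε)) *
        ((π / ε : ℂ) ^ (1 / 2 : ℂ) * cexp (-(-(z.2 : ℂ)) ^ 2 / (4 * ε)))
      = (π / ε : ℂ) ^ ((1 / 2 : ℂ) + 1 / 2) *
          cexp (-(-(z.1 : ℂ)) ^ 2 / (4 * ε) + -(-(z.2 : ℂ)) ^ 2 / (4 * ε)) := by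
        rw [cpow_add _ _ hπε, Complex.exp_add]; ring
    _ = heatKernel2 ε z := by
        rw [show (1 / 2 : ℂ) + 1 / 2 = 1 by norm_num, cpow_one, heatKernel2]
        push_cast
        ring_nf

lemma lintegral_heatKernel2 {ε : ℝ} (hε : 0 < ε) :
    ∫⁻ z, ENNReal.ofReal (heatKernel2 ε z) = ENNReal.ofReal (4 * π ^ 2) := by
  have hK : heatKernel2 ε = fun z => π / ε * gaussian2 (4 * ε)⁻¹ z := by
    ext z; simp only [heatKernel2, gaussian2]; congr 2; field_simp
  have hmass : ∫ z, gaussian2 (4 * ε)⁻¹ z = 4 * π * ε := by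
    simp_rw [gaussian2_eq_mul, Measure.volume_eq_prod]
    rw [integral_prod_mul (fun t : ℝ => Real.exp (-(4 * ε)⁻¹ * t ^ 2))
      (fun t : ℝ => Real.exp (-(4 * ε)⁻¹ * t ^ 2)), integral_gaussian,
      ← Real.sqrt_mul (by positivity),
      show π / (4 * ε)⁻¹ * (π / (4 * ε)⁻¹) = (4 * π * ε) ^ 2 by field_simp,
      Real.sqrt_sq (by positivity)]
  rw [← ofReal_integral_eq_lintegral_ofReal
      (hK ▸ (integrable_gaussian2 (by positivity)).const_mul _)
      (Filter.Eventually.of_forall (heatKernel2_nonneg hε)),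
    hK, integral_const_mul, hmass]
  congr 1; field_simp

lemma fourierTransform2_apply (h : ℝ × ℝ → ℂ) (ξ : ℝ × ℝ) :
    fourierTransform2 h ξ = ∫ y, dotPhase y ξ * h y := rfl

lemma fourierTransform2_eq_zero_of_not_integrable {h : ℝ × ℝ → ℂ} (hh : ¬Integrable h) :
    fourierTransform2 h = 0 := by
  ext ξ
  rw [Pi.zero_apply, fourierTransform2_apply]
  refine integral_undef fun hint => hh ?_
  refine (hint.bdd_mul (c := 1) (f := fun y => conj (dotPhase y ξ)) (by fun_prop)
    (Filter.Eventually.of_forall fun y => by simp [norm_dotPhase])).congr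
    (Filter.Eventually.of_forall fun y => ?_)
  beta_reduce
  rw [← mul_assoc, Complex.conj_mul', norm_dotPhase, ofReal_one, one_pow, one_mul]

lemma norm_fourierTransform2_le (h : ℝ × ℝ → ℂ) (ξ : ℝ × ℝ) :
    ‖fourierTransform2 h ξ‖ ≤ ∫ y, ‖h y‖ := by
  rw [fourierTransform2_apply]
  exact (norm_integral_le_integral_norm _).trans_eq (by simp_rw [norm_mul, norm_dotPhase, one_mul])

lemma aestronglyMeasurable_fourierTransform2 {h : ℝ × ℝ → ℂ} (hh : AEStronglyMeasurable h) :
    AEStronglyMeasurable (fourierTransform2 h) :=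
  ((by fun_prop : Continuous fun p : (ℝ × ℝ) × (ℝ × ℝ) => dotPhase p.2 p.1).aestronglyMeasurable.mul
    hh.comp_snd).integral_prod_right'

section RegularizedPlancherel

variable {h : ℝ × ℝ → ℂ} {ε : ℝ}

lemma integral_gaussian2_mul_dotPhase_mul_conj_fourierTransform2 (hh : Integrable h) (hε : 0 < ε)
    (y : ℝ × ℝ) :
    ∫ ξ, (gaussian2 ε ξ : ℂ) * dotPhase y ξ * conj (fourierTransform2 h ξ) =
      ∫ y', (heatKernel2 ε (y - y') : ℂ) * conj (h y') := by
  have hint : Integrable (Function.uncurry fun ξ y' =>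
      (gaussian2 ε ξ : ℂ) * dotPhase (y - y') ξ * conj (h y')) (volume.prod volume) := by
    refine Integrable.mono' ((integrable_gaussian2 hε).mul_prod hh.norm) ?_
      (Filter.Eventually.of_forall fun ⟨ξ, y'⟩ => ?_)
    · exact ((by fun_prop : Continuous fun p : (ℝ × ℝ) × (ℝ × ℝ) =>
        (gaussian2 ε p.1 : ℂ) * dotPhase (y - p.2) p.1).aestronglyMeasurable.mul
        (hh.1.comp_snd.star))
    · simp only [Function.uncurry_apply_pair, norm_mul, norm_real, norm_dotPhase, RCLike.norm_conj,
        Real.norm_of_nonneg (gaussian2_nonneg ε ξ), mul_one, le_refl]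
  calc ∫ ξ, (gaussian2 ε ξ : ℂ) * dotPhase y ξ * conj (fourierTransform2 h ξ)
      = ∫ ξ, ∫ y', (gaussian2 ε ξ : ℂ) * dotPhase (y - y') ξ * conj (h y') := by
        congr 1 with ξ
        simp only [fourierTransform2_apply, ← integral_conj, ← integral_const_mul, map_mul,
          ← dotPhase_mul_conj]
        ring_nf
    _ = ∫ y', (heatKernel2 ε (y - y') : ℂ) * conj (h y') := by
        rw [integral_integral_swap hint]
        simp_rw [integral_mul_const, integral_gaussian2_mul_dotPhase hε]

lemma integral_gaussian2_mul_normSq_fourierTransform2 (hh : Integrable h) (hε : 0 < ε) :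
    ∫ ξ, (gaussian2 ε ξ : ℂ) * (fourierTransform2 h ξ * conj (fourierTransform2 h ξ)) =
      ∫ y, h y * ∫ y', (heatKernel2 ε (y - y') : ℂ) * conj (h y') := by
  have hint : Integrable (Function.uncurry fun ξ y =>
      dotPhase y ξ * h y * ((gaussian2 ε ξ : ℂ) * conj (fourierTransform2 h ξ)))
      (volume.prod volume) := by
    refine Integrable.mono'
      (((integrable_gaussian2 hε).mul_const (∫ y, ‖h y‖)).mul_prod hh.norm) ?_
      (Filter.Eventually.of_forall fun ⟨ξ, y⟩ => ?_)
    · exact ((by fun_prop : Continuous fun p : (ℝ × ℝ) × (ℝ × ℝ) => dotPhase p.2 p.1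
        ).aestronglyMeasurable.mul hh.1.comp_snd).mul
        ((by fun_prop : Continuous fun ξ => (gaussian2 ε ξ : ℂ)).aestronglyMeasurable.mul
          (aestronglyMeasurable_fourierTransform2 hh.1).star).comp_fst
    · simp only [Function.uncurry_apply_pair, norm_mul, norm_real, norm_dotPhase, RCLike.norm_conj,
        Real.norm_of_nonneg (gaussian2_nonneg ε ξ), one_mul]
      have := mul_le_mul_of_nonneg_left (norm_fourierTransform2_le h ξ) (gaussian2_nonneg ε ξ)
      nlinarith [norm_nonneg (h y)]
  calc ∫ ξ, (gaussian2 ε ξ : ℂ) * (fourierTransform2 h ξ * conj (fourierTransform2 h ξ))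
      = ∫ ξ, ∫ y, dotPhase y ξ * h y * ((gaussian2 ε ξ : ℂ) * conj (fourierTransform2 h ξ)) := by
        congr 1 with ξ
        rw [mul_left_comm]
        exact (integral_mul_const _ _).symm
    _ = ∫ y, h y * ∫ ξ, (gaussian2 ε ξ : ℂ) * dotPhase y ξ * conj (fourierTransform2 h ξ) := by
        rw [integral_integral_swap hint]
        congr 1 with y
        rw [← integral_const_mul]
        congr 1 with ξ
        ring
    _ = ∫ y, h y * ∫ y', (heatKernel2 ε (y - y') : ℂ) * conj (h y') := by
        simp_rw [integral_gaussian2_mul_dotPhase_mul_conj_fourierTransform2 hh hε]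

lemma lintegral_gaussian2_mul_enorm_fourierTransform2_sq_le (hh : Integrable h) (hε : 0 < ε) :
    ∫⁻ ξ, ENNReal.ofReal (gaussian2 ε ξ) * ‖fourierTransform2 h ξ‖ₑ ^ 2 ≤
      ENNReal.ofReal (4 * π ^ 2) * ∫⁻ y, ‖h y‖ₑ ^ 2 := by
  have hint : Integrable fun ξ => gaussian2 ε ξ * ‖fourierTransform2 h ξ‖ ^ 2 := by
    refine Integrable.mono' ((integrable_gaussian2 hε).mul_const ((∫ y, ‖h y‖) ^ 2))
      ((continuous_gaussian2 ε).aestronglyMeasurable.mul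
        ((aestronglyMeasurable_fourierTransform2 hh.1).norm.pow 2))
      (Filter.Eventually.of_forall fun ξ => ?_)
    rw [Real.norm_of_nonneg (by have := gaussian2_nonneg ε ξ; positivity)]
    gcongr
    · exact gaussian2_nonneg ε ξ
    · exact norm_fourierTransform2_le h ξ
  have hK : Measurable fun z => ENNReal.ofReal (heatKernel2 ε z) :=
    (continuous_heatKernel2 ε).measurable.ennreal_ofReal
  calc ∫⁻ ξ, ENNReal.ofReal (gaussian2 ε ξ) * ‖fourierTransform2 h ξ‖ₑ ^ 2
      = ENNReal.ofReal (∫ ξ, gaussian2 ε ξ * ‖fourierTransform2 h ξ‖ ^ 2) := by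
        rw [ofReal_integral_eq_lintegral_ofReal hint
          (Filter.Eventually.of_forall fun ξ => by have := gaussian2_nonneg ε ξ; positivity)]
        congr 1 with ξ
        rw [ENNReal.ofReal_mul (gaussian2_nonneg ε ξ), ENNReal.ofReal_pow (norm_nonneg _),
          ofReal_norm]
    _ = ‖∫ ξ, (gaussian2 ε ξ : ℂ) * (fourierTransform2 h ξ * conj (fourierTransform2 h ξ))‖ₑ := by
        have hpt : ∀ ξ, (gaussian2 ε ξ : ℂ) * (fourierTransform2 h ξ *
            conj (fourierTransform2 h ξ)) =
              ((gaussian2 ε ξ * ‖fourierTransform2 h ξ‖ ^ 2 : ℝ) : ℂ) :=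
          fun ξ => by rw [Complex.mul_conj']; push_cast; ring
        rw [integral_congr_ae (ae_of_all _ hpt), integral_complex_ofReal]
        exact (Complex.enorm_ofReal_of_nonneg (integral_nonneg fun ξ =>
          mul_nonneg (gaussian2_nonneg ε ξ) (sq_nonneg _))).symm
    _ = ‖∫ y, h y * ∫ y', (heatKernel2 ε (y - y') : ℂ) * conj (h y')‖ₑ := by
        rw [integral_gaussian2_mul_normSq_fourierTransform2 hh hε]
    _ ≤ ∫⁻ y, ‖h y‖ₑ * ∫⁻ y', ‖h y'‖ₑ * ENNReal.ofReal (heatKernel2 ε (y - y')) := by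
        refine (enorm_integral_le_lintegral_enorm _).trans (lintegral_mono fun y => ?_)
        rw [enorm_mul]
        refine mul_le_mul_right ((enorm_integral_le_lintegral_enorm _).trans_eq
          (lintegral_congr fun y' => ?_)) _
        rw [enorm_mul, RCLike.enorm_conj, mul_comm,
          Complex.enorm_ofReal_of_nonneg (heatKernel2_nonneg hε _)]
    _ ≤ (∫⁻ z, ENNReal.ofReal (heatKernel2 ε z)) * ∫⁻ y, ‖h y‖ₑ ^ 2 :=
        lintegral_mul_lintegral_mul_sub_le hh.1.enorm hK
    _ = ENNReal.ofReal (4 * π ^ 2) * ∫⁻ y, ‖h y‖ₑ ^ 2 := by rw [lintegral_heatKernel2 hε]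

end RegularizedPlancherel

theorem lintegral_enorm_fourierTransform2_sq_le (h : ℝ × ℝ → ℂ) :
    ∫⁻ ξ, ‖fourierTransform2 h ξ‖ₑ ^ 2 ≤ ENNReal.ofReal (4 * π ^ 2) * ∫⁻ y, ‖h y‖ₑ ^ 2 := by
  by_cases hh : Integrable h
  swap
  · simp [fourierTransform2_eq_zero_of_not_integrable hh]
  set ε : ℕ → ℝ := fun n => 1 / (n + 1)
  have hε : ∀ n, 0 < ε n := fun n => by positivity
  have hlim : ∀ ξ, Filter.Tendsto (fun n => ENNReal.ofReal (gaussian2 (ε n) ξ) *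
      ‖fourierTransform2 h ξ‖ₑ ^ 2) Filter.atTop (nhds (‖fourierTransform2 h ξ‖ₑ ^ 2)) := by
    intro ξ
    have hc : Continuous fun ε : ℝ => ENNReal.ofReal (gaussian2 ε ξ) :=
      ENNReal.continuous_ofReal.comp (by unfold gaussian2; fun_prop)
    have h0 : ENNReal.ofReal (gaussian2 0 ξ) = 1 := by simp [gaussian2]
    have := ENNReal.Tendsto.mul_const (b := ‖fourierTransform2 h ξ‖ₑ ^ 2)
      ((hc.tendsto 0).comp tendsto_one_div_add_atTop_nhds_zero_nat) (by simp [h0])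
    rwa [h0, one_mul] at this
  calc ∫⁻ ξ, ‖fourierTransform2 h ξ‖ₑ ^ 2
      = ∫⁻ ξ, Filter.liminf (fun n => ENNReal.ofReal (gaussian2 (ε n) ξ) *
          ‖fourierTransform2 h ξ‖ₑ ^ 2) Filter.atTop :=
        lintegral_congr fun ξ => (hlim ξ).liminf_eq.symm
    _ ≤ Filter.liminf (fun n => ∫⁻ ξ, ENNReal.ofReal (gaussian2 (ε n) ξ) *
          ‖fourierTransform2 h ξ‖ₑ ^ 2) Filter.atTop :=
        lintegral_liminf_le' fun n =>
          ((continuous_gaussian2 _).measurable.ennreal_ofReal.aemeasurable.mul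
          ((aestronglyMeasurable_fourierTransform2 hh.1).enorm.pow_const 2))
    _ ≤ ENNReal.ofReal (4 * π ^ 2) * ∫⁻ y, ‖h y‖ₑ ^ 2 :=
        Filter.liminf_le_of_frequently_le' (Filter.Frequently.of_forall fun n =>
          lintegral_gaussian2_mul_enorm_fourierTransform2_sq_le hh (hε n))

lemma jBracket_pos (s : ℝ) : 0 < jBracket s := Real.sqrt_pos.2 (by positivity)

lemma jBracket_sq (s : ℝ) : jBracket s ^ 2 = 1 + s ^ 2 := Real.sq_sqrt (by positivity)

lemma jBracket_neg (s : ℝ) : jBracket (-s) = jBracket s := by simp [jBracket]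

@[fun_prop]
lemma continuous_jBracket : Continuous jBracket := by
  unfold jBracket; fun_prop

lemma jBracket_sq_le (a b : ℝ) : jBracket a ^ 2 ≤ 2 * jBracket (b - a) ^ 2 * jBracket b ^ 2 := by
  simp only [jBracket_sq]
  nlinarith [sq_nonneg (a + b), sq_nonneg ((b - a) * b), sq_nonneg (b - a)]

lemma jBracket_sq_zpow_le (N : ℤ) (a b : ℝ) :
    (jBracket a ^ 2) ^ N ≤ (2 * jBracket (b - a) ^ 2) ^ N.natAbs * (jBracket b ^ 2) ^ N := by
  refine zpow_le_pow_natAbs_mul_zpow (pow_pos (jBracket_pos a) 2) (pow_pos (jBracket_pos b) 2)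
    (jBracket_sq_le a b) ?_ N
  have := jBracket_sq_le b a
  rwa [show a - b = -(b - a) by ring, jBracket_neg] at this

lemma lintegral_jBracket_sq_pow_mul_enorm_sq_lt_top (g : SchwartzMap (ℝ × ℝ) ℝ) (k : ℕ) :
    ∫⁻ z, ENNReal.ofReal ((2 * jBracket z.1 ^ 2) ^ k) * ‖g z‖ₑ ^ 2 < ⊤ := by
  set M := SchwartzMap.seminorm ℝ 0 0 g
  have hbound : ∀ z : ℝ × ℝ, (2 * jBracket z.1 ^ 2) ^ k * ‖g z‖ ^ 2 ≤
      (2 ^ k * 2 ^ (k - 1) * M) * (‖g z‖ + ‖z‖ ^ (2 * k) * ‖g z‖) := by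
    intro z
    have h1 : 2 * jBracket z.1 ^ 2 ≤ 2 * (1 + ‖z‖ ^ 2) := by
      rw [jBracket_sq]
      nlinarith [sq_abs z.1, abs_nonneg z.1, (Real.norm_eq_abs z.1) ▸ norm_fst_le z]
    have h2 : (2 * jBracket z.1 ^ 2) ^ k ≤ 2 ^ k * (2 ^ (k - 1) * (1 + ‖z‖ ^ (2 * k))) := by
      calc (2 * jBracket z.1 ^ 2) ^ k ≤ (2 * (1 + ‖z‖ ^ 2)) ^ k :=
            pow_le_pow_left₀ (by positivity) h1 k
        _ ≤ 2 ^ k * (2 ^ (k - 1) * (1 + ‖z‖ ^ (2 * k))) := by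
            rw [mul_pow, pow_mul]
            gcongr
            simpa using add_pow_le zero_le_one (sq_nonneg ‖z‖) k
    have h3 : ‖g z‖ ^ 2 ≤ M * ‖g z‖ := by
      rw [sq]; exact mul_le_mul_of_nonneg_right (g.norm_le_seminorm ℝ z) (norm_nonneg _)
    calc (2 * jBracket z.1 ^ 2) ^ k * ‖g z‖ ^ 2
        ≤ 2 ^ k * (2 ^ (k - 1) * (1 + ‖z‖ ^ (2 * k))) * (M * ‖g z‖) :=
          mul_le_mul h2 h3 (sq_nonneg _) (by positivity)
      _ = _ := by ring
  have hint : Integrable fun z : ℝ × ℝ =>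
      (2 ^ k * 2 ^ (k - 1) * M) * (‖g z‖ + ‖z‖ ^ (2 * k) * ‖g z‖) :=
    (g.integrable.norm.add (g.integrable_pow_mul volume (2 * k))).const_mul _
  refine lt_of_le_of_lt (lintegral_mono fun z => ?_) hint.lintegral_lt_top
  rw [← ofReal_norm, ← ENNReal.ofReal_pow (norm_nonneg _), ← ENNReal.ofReal_mul (by positivity)]
  exact ENNReal.ofReal_le_ofReal (hbound z)

lemma lintegral_jBracket_sq_zpow_mul_enorm_rescaled_sq_le (g : SchwartzMap (ℝ × ℝ) ℝ) (N : ℤ)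
    {μ : ℝ} (hμ : 0 < μ) (y : ℝ × ℝ) :
    ENNReal.ofReal μ * ∫⁻ x, ENNReal.ofReal ((jBracket (√μ * x.1) ^ 2) ^ N) *
        ‖g (√μ • (y - x))‖ₑ ^ 2 ≤
      (∫⁻ z, ENNReal.ofReal ((2 * jBracket z.1 ^ 2) ^ N.natAbs) * ‖g z‖ₑ ^ 2) *
        ENNReal.ofReal ((jBracket (√μ * y.1) ^ 2) ^ N) := by
  set s := √μ
  set Φ : ℝ × ℝ → ℝ≥0∞ := fun z => ENNReal.ofReal ((2 * jBracket z.1 ^ 2) ^ N.natAbs) * ‖g z‖ₑ ^ 2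
  have hs : s ≠ 0 := (Real.sqrt_pos.2 hμ).ne'
  have hΦ : Measurable Φ := by
    refine Measurable.mul ?_ (g.continuous.measurable.enorm.pow_const 2)
    exact (by fun_prop : Continuous fun z : ℝ × ℝ => (2 * jBracket z.1 ^ 2) ^ N.natAbs
      ).measurable.ennreal_ofReal
  have hpeetre : ∀ x : ℝ × ℝ, ENNReal.ofReal ((jBracket (s * x.1) ^ 2) ^ N) *
      ‖g (s • (y - x))‖ₑ ^ 2 ≤ ENNReal.ofReal ((jBracket (s * y.1) ^ 2) ^ N) * Φ (s • (y - x)) := by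
    intro x
    have hfst : (s • (y - x)).1 = s * y.1 - s * x.1 := by simp [mul_sub]
    rw [← mul_assoc, ← ENNReal.ofReal_mul (by positivity), mul_comm ((jBracket (s * y.1) ^ 2) ^ N),
      hfst]
    gcongr
    exact jBracket_sq_zpow_le N _ _
  have hscale : ∫⁻ x, Φ (s • (y - x)) = ENNReal.ofReal μ⁻¹ * ∫⁻ z, Φ z := by
    rw [lintegral_sub_left_eq_self (fun x => Φ (s • x)) y, lintegral_comp_smul volume hΦ hs]
    simp [s, Real.sq_sqrt hμ.le, abs_of_pos hμ]
  calc ENNReal.ofReal μ * ∫⁻ x, ENNReal.ofReal ((jBracket (s * x.1) ^ 2) ^ N) *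
        ‖g (s • (y - x))‖ₑ ^ 2
      ≤ ENNReal.ofReal μ * ∫⁻ x, ENNReal.ofReal ((jBracket (s * y.1) ^ 2) ^ N) *
          Φ (s • (y - x)) := mul_le_mul_right (lintegral_mono hpeetre) _
    _ = (ENNReal.ofReal μ * ENNReal.ofReal μ⁻¹) * (∫⁻ z, Φ z) *
          ENNReal.ofReal ((jBracket (s * y.1) ^ 2) ^ N) := by
        rw [lintegral_const_mul' _ _ ENNReal.ofReal_ne_top, hscale]; ring
    _ = (∫⁻ z, Φ z) * ENNReal.ofReal ((jBracket (s * y.1) ^ 2) ^ N) := by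
        rw [← ENNReal.ofReal_mul hμ.le, mul_inv_cancel₀ hμ.ne', ENNReal.ofReal_one, one_mul]

lemma enorm_ofReal_jBracket_zpow_mul_sq (t : ℝ) (N : ℤ) (v : ℂ) :
    ‖((jBracket t ^ N : ℝ) : ℂ) * v‖ₑ ^ 2 = ENNReal.ofReal ((jBracket t ^ 2) ^ N) * ‖v‖ₑ ^ 2 := by
  have hpos : 0 ≤ jBracket t ^ N := (zpow_pos (jBracket_pos t) N).le
  have hcomm : (jBracket t ^ N) ^ 2 = (jBracket t ^ 2) ^ N := by
    rw [← zpow_natCast, ← zpow_mul, ← zpow_natCast, ← zpow_mul, mul_comm]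
  rw [enorm_mul, mul_pow, Complex.enorm_ofReal_of_nonneg hpos, ← ENNReal.ofReal_pow hpos, hcomm]

lemma wavePacket_eq_mul_fourierTransform2 (μ : ℝ) (g : SchwartzMap (ℝ × ℝ) ℝ) (f : ℝ × ℝ → ℂ)
    (x ξ : ℝ × ℝ) :
    wavePacket μ g f x ξ = √μ * (conj (dotPhase x ξ) *
      fourierTransform2 (fun y => (g (√μ • (y - x)) : ℂ) * f y) ξ) := by
  rw [wavePacket, fourierTransform2_apply, ← integral_const_mul (conj (dotPhase x ξ))]
  congr 1
  refine integral_congr_ae (ae_of_all _ fun y => ?_)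
  simp only [dotPhase, ← Complex.exp_conj, ← mul_assoc, ← Complex.exp_add, map_mul, map_neg,
    conj_I, conj_ofReal]
  congr 3
  push_cast
  ring

lemma lintegral_enorm_wavePacket_sq_le {μ : ℝ} (hμ : 0 ≤ μ) (g : SchwartzMap (ℝ × ℝ) ℝ)
    (f : ℝ × ℝ → ℂ) (x : ℝ × ℝ) :
    ∫⁻ ξ, ‖wavePacket μ g f x ξ‖ₑ ^ 2 ≤
      ENNReal.ofReal (4 * π ^ 2) * ENNReal.ofReal μ *
        ∫⁻ y, ‖g (√μ • (y - x))‖ₑ ^ 2 * ‖f y‖ₑ ^ 2 := by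
  have hμ' : ‖(√μ : ℂ)‖ₑ ^ 2 = ENNReal.ofReal μ := by
    rw [Complex.enorm_ofReal_of_nonneg (Real.sqrt_nonneg μ),
      ← ENNReal.ofReal_pow (Real.sqrt_nonneg μ), Real.sq_sqrt hμ]
  have hslice : ∀ y, ‖(g (√μ • (y - x)) : ℂ) * f y‖ₑ ^ 2 =
      ‖g (√μ • (y - x))‖ₑ ^ 2 * ‖f y‖ₑ ^ 2 := by
    intro y
    rw [enorm_mul, mul_pow, ← ofReal_norm, norm_real, ofReal_norm]
  calc ∫⁻ ξ, ‖wavePacket μ g f x ξ‖ₑ ^ 2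
      = ENNReal.ofReal μ *
          ∫⁻ ξ, ‖fourierTransform2 (fun y => (g (√μ • (y - x)) : ℂ) * f y) ξ‖ₑ ^ 2 := by
        simp_rw [wavePacket_eq_mul_fourierTransform2, enorm_mul, RCLike.enorm_conj, enorm_dotPhase,
          one_mul, mul_pow, hμ']
        exact lintegral_const_mul' _ _ ENNReal.ofReal_ne_top
    _ ≤ ENNReal.ofReal μ * (ENNReal.ofReal (4 * π ^ 2) *
          ∫⁻ y, ‖g (√μ • (y - x))‖ₑ ^ 2 * ‖f y‖ₑ ^ 2) := by
        simp_rw [← hslice]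
        exact mul_le_mul_right (lintegral_enorm_fourierTransform2_sq_le _) _
    _ = _ := by ring

lemma lintegral_enorm_jBracket_zpow_mul_wavePacket_sq_le (g : SchwartzMap (ℝ × ℝ) ℝ) (N : ℤ)
    {μ : ℝ} (hμ : 0 < μ) {f : ℝ × ℝ → ℂ} (hf : AEStronglyMeasurable f) :
    ∫⁻ p : (ℝ × ℝ) × (ℝ × ℝ),
        ‖((jBracket (√μ * p.1.1) ^ N : ℝ) : ℂ) * wavePacket μ g f p.1 p.2‖ₑ ^ 2
      ≤ (ENNReal.ofReal (4 * π ^ 2) *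
          ∫⁻ z, ENNReal.ofReal ((2 * jBracket z.1 ^ 2) ^ N.natAbs) * ‖g z‖ₑ ^ 2) *
        ∫⁻ y, ‖((jBracket (√μ * y.1) ^ N : ℝ) : ℂ) * f y‖ₑ ^ 2 := by
  set c := ENNReal.ofReal (4 * π ^ 2)
  set D := ∫⁻ z, ENNReal.ofReal ((2 * jBracket z.1 ^ 2) ^ N.natAbs) * ‖g z‖ₑ ^ 2
  set W : ℝ × ℝ → ℝ≥0∞ := fun x => ENNReal.ofReal ((jBracket (√μ * x.1) ^ 2) ^ N)
  set G : ℝ × ℝ → ℝ × ℝ → ℝ≥0∞ := fun x y => ‖g (√μ • (y - x))‖ₑ ^ 2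
  have hmeas : AEMeasurable (fun p : (ℝ × ℝ) × (ℝ × ℝ) => W p.1 * G p.1 p.2 * ‖f p.2‖ₑ ^ 2)
      (volume.prod volume) := by
    have hW : Measurable W := (Continuous.zpow₀ (by fun_prop) N fun x =>
      Or.inl (pow_pos (jBracket_pos _) 2).ne').measurable.ennreal_ofReal
    have hG : Measurable fun p : (ℝ × ℝ) × (ℝ × ℝ) => G p.1 p.2 :=
      (g.continuous.comp (by fun_prop : Continuous fun p : (ℝ × ℝ) × (ℝ × ℝ) =>
        √μ • (p.2 - p.1))).measurable.enorm.pow_const 2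
    exact ((hW.comp measurable_fst).mul hG).aemeasurable.mul (hf.enorm.pow_const 2).comp_snd
  calc ∫⁻ p : (ℝ × ℝ) × (ℝ × ℝ),
        ‖((jBracket (√μ * p.1.1) ^ N : ℝ) : ℂ) * wavePacket μ g f p.1 p.2‖ₑ ^ 2
      ≤ ∫⁻ x, ∫⁻ ξ, ‖((jBracket (√μ * x.1) ^ N : ℝ) : ℂ) * wavePacket μ g f x ξ‖ₑ ^ 2 :=
        lintegral_prod_le _
    _ = ∫⁻ x, W x * ∫⁻ ξ, ‖wavePacket μ g f x ξ‖ₑ ^ 2 := by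
        simp_rw [enorm_ofReal_jBracket_zpow_mul_sq]
        exact lintegral_congr fun x => lintegral_const_mul' _ _ ENNReal.ofReal_ne_top
    _ ≤ ∫⁻ x, W x * (c * ENNReal.ofReal μ * ∫⁻ y, G x y * ‖f y‖ₑ ^ 2) :=
        lintegral_mono fun x => mul_le_mul_right (lintegral_enorm_wavePacket_sq_le hμ.le g f x) _
    _ = c * ∫⁻ y, ‖f y‖ₑ ^ 2 * (ENNReal.ofReal μ * ∫⁻ x, W x * G x y) := by
        simp_rw [mul_left_comm (W _)]
        rw [lintegral_const_mul' _ _ (by finiteness), lintegral_mul_lintegral_comm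
          (fun _ => ENNReal.ofReal_ne_top) (fun _ => by finiteness) hmeas, mul_assoc,
          ← lintegral_const_mul' _ _ ENNReal.ofReal_ne_top]
        simp_rw [mul_left_comm (ENNReal.ofReal μ)]
        rfl
    _ ≤ c * ∫⁻ y, ‖f y‖ₑ ^ 2 * (D * W y) :=
        mul_le_mul_right (lintegral_mono fun y =>
          mul_le_mul_right (lintegral_jBracket_sq_zpow_mul_enorm_rescaled_sq_le g N hμ y) _) _
    _ = c * D * ∫⁻ y, ‖((jBracket (√μ * y.1) ^ N : ℝ) : ℂ) * f y‖ₑ ^ 2 := by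
        simp_rw [enorm_ofReal_jBracket_zpow_mul_sq]
        rw [mul_assoc, ← lintegral_const_mul' D _
          (lintegral_jBracket_sq_pow_mul_enorm_sq_lt_top g N.natAbs).ne]
        congr 1
        refine lintegral_congr fun y => ?_
        ring

/-- **Weighted `L²` bounds for the wave packet transform.**  With `x' = (x₂,x₃)` and
`y' = (y₂,y₃)`, for every integer `N` (positive or negative) there is a constant `C_N`,
independent of `μ ≥ 1`, such that
`‖⟨μ^{1/2}x₂⟩^N (T_μ f)(x',ξ')‖_{L²(ℝ⁴)} ≤ C_N ‖⟨μ^{1/2}y₂⟩^N f‖_{L²(ℝ²)}`. -/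
theorem wavePacket_weighted_L2 :
    ∀ c : ℝ, 0 < c → ∀ g : SchwartzMap (ℝ × ℝ) ℝ,
      (∀ x y : ℝ × ℝ, euclNorm2 x = euclNorm2 y → g x = g y) →
      eLpNorm (fun x => (g x : ℝ)) 2 volume = ENNReal.ofReal ((2 * Real.pi)⁻¹) →
      (∀ ζ : ℝ × ℝ, c < euclNorm2 ζ → fourierTransform2 (fun x => ((g x : ℝ) : ℂ)) ζ = 0) →
      ∀ N : ℤ, ∃ C : ℝ, 0 < C ∧
        ∀ μ : ℝ, 1 ≤ μ → ∀ f : ℝ × ℝ → ℂ, AEStronglyMeasurable f volume →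
          eLpNorm (fun p : (ℝ × ℝ) × (ℝ × ℝ) =>
              ((jBracket (Real.sqrt μ * p.1.1) ^ N : ℝ) : ℂ) * wavePacket μ g f p.1 p.2) 2 volume
            ≤ ENNReal.ofReal C *
              eLpNorm (fun y : ℝ × ℝ =>
                ((jBracket (Real.sqrt μ * y.1) ^ N : ℝ) : ℂ) * f y) 2 volume := by
  intro _ _ g _ _ _ N
  set K := ENNReal.ofReal (4 * π ^ 2) *
    ∫⁻ z, ENNReal.ofReal ((2 * jBracket z.1 ^ 2) ^ N.natAbs) * ‖g z‖ₑ ^ 2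
  have hK : K ≠ ⊤ := ENNReal.mul_ne_top ENNReal.ofReal_ne_top
    (lintegral_jBracket_sq_pow_mul_enorm_sq_lt_top g N.natAbs).ne
  refine ⟨√K.toReal + 1, by positivity, fun μ hμ f hf => ?_⟩
  refine eLpNorm_two_le_mul_of_lintegral_sq_le
    ((lintegral_enorm_jBracket_zpow_mul_wavePacket_sq_le g N (by linarith) hf).trans
      (mul_le_mul_left ?_ _))
  calc K = ENNReal.ofReal (√K.toReal ^ 2) := by
        rw [Real.sq_sqrt ENNReal.toReal_nonneg, ENNReal.ofReal_toReal hK]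
    _ ≤ ENNReal.ofReal (√K.toReal + 1) ^ 2 := by
        rw [← ENNReal.ofReal_pow (by positivity)]
        gcongr
        linarith
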